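/- Let α ∈ (0,1) and let ℓ be slowly varying at 0. Then there exists λ₀ ∈ (0,1) such that for all λ ∈ (0, λ₀) and all δ ∈ (0, 1/2]: ∫_1^∞ (1 − e^{−λx})·x^{−α−1}·ℓ(δ^{1/α}/x) dx ≥ (1/(4α))·λ^α·ℓ(λ·δ^{1/α}). (Consequently, a subordinator S with Laplace transform E[exp(−λS(1))] = exp(−δ·∫_1^∞ (1 − e^{−λx})·x^{−α−1}·ℓ(δ^{1/α}/x) dx) satisfies E[exp(−λS(1))] ≤ exp(−(1/(4α))·δ·λ^α·ℓ(λ·δ^{1/α})) uniformly in δ ∈ (0,1/2].) -/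

import Mathlib

open MeasureTheory ProbabilityTheory Filter Set

noncomputable section

/-- A path is cadlag on `[0,∞)`: right-continuous everywhere on `[0,∞)` and
with left limits at every `t > 0`. -/
def CadlagOn (f : ℝ → ℝ) : Prop :=
  (∀ t : ℝ, 0 ≤ t → Tendsto f (nhdsWithin t (Set.Ici t)) (nhds (f t))) ∧
  (∀ t : ℝ, 0 < t → ∃ l : ℝ, Tendsto f (nhdsWithin t (Set.Iio t)) (nhds l))

/-- `X` is a Lévy process under `P`. -/
def IsLevyProcess {Ω : Type*} [MeasurableSpace Ω] (P : Measure Ω) (X : ℝ → Ω → ℝ) : Prop :=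
  (∀ᵐ ω ∂P, X 0 ω = 0) ∧
  (∀ (n : ℕ) (t : Fin (n + 1) → ℝ), (∀ i, 0 ≤ t i) → Monotone t →
    iIndepFun
      (fun i : Fin n => fun ω => X (t i.succ) ω - X (t i.castSucc) ω) P) ∧
  (∀ s t : ℝ, 0 ≤ s → 0 ≤ t →
    Measure.map (fun ω => X (t + s) ω - X s ω) P = Measure.map (X t) P) ∧
  (∀ᵐ ω ∂P, CadlagOn (fun t => X t ω))

/-- `X` is a subordinator: a Lévy process with a.s. nondecreasing paths. -/
def IsSubordinator {Ω : Type*} [MeasurableSpace Ω] (P : Measure Ω) (X : ℝ → Ω → ℝ) : Prop :=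
  IsLevyProcess P X ∧ ∀ᵐ ω ∂P, ∀ s t : ℝ, 0 ≤ s → s ≤ t → X s ω ≤ X t ω

/-- `X` has Lévy triplet `(b, σ², ν)` under `P`. -/
def HasLevyTriplet {Ω : Type*} [MeasurableSpace Ω] (P : Measure Ω) (X : ℝ → Ω → ℝ)
    (b σ2 : ℝ) (ν : Measure ℝ) : Prop :=
  ν {0} = 0 ∧ (∫⁻ x : ℝ, ENNReal.ofReal (min 1 (x ^ 2)) ∂ν) < ⊤ ∧
  ∀ t : ℝ, 0 ≤ t → ∀ u : ℝ,
    (∫ ω, Complex.exp (Complex.I * u * X t ω) ∂P) =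
      Complex.exp ((t : ℂ) * (Complex.I * b * u - σ2 * u ^ 2 / 2 +
        ∫ x : ℝ, (Complex.exp (Complex.I * u * x) - 1 -
          (if |x| ≤ 1 then Complex.I * u * x else 0)) ∂ν))

/-- `ℓ` is slowly varying at `0`. -/
def SlowlyVaryingAtZero (ℓ : ℝ → ℝ) : Prop :=
  Measurable ℓ ∧ (∀ x : ℝ, 0 < x → 0 < ℓ x) ∧
  ∀ c : ℝ, 0 < c →
    Tendsto (fun x => ℓ (c * x) / ℓ x) (nhdsWithin 0 (Set.Ioi 0)) (nhds 1)

/-- `X` belongs to the domain of attraction `D(α, ρ)` of a strictly `α`-stable law,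
with norming function `c`. -/
def InDomainOfAttraction {Ω : Type*} [MeasurableSpace Ω] (P : Measure Ω) (X : ℝ → Ω → ℝ)
    (α ρ : ℝ) (c : ℝ → ℝ) : Prop :=
  (∀ t : ℝ, 0 < t → 0 < c t) ∧
  ∃ κ : ℝ, 0 < κ ∧ ∃ θ : ℝ, θ ∈ Set.Ioo (-1 : ℝ) 1 ∧ ρ = (1 + θ) / 2 ∧
    ∀ u : ℝ,
      Tendsto (fun t => ∫ ω, Complex.exp (Complex.I * u * (X t ω / c t)) ∂P) atTop
        (nhds (Complex.exp (-((|u| ^ α : ℝ) : ℂ) * (κ : ℂ) *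
          Complex.exp (-Complex.I * (Real.pi * α / 2) * θ * Real.sign u))))

/-- `δ(T) = min((ln ln T)⁻¹, 1/2)`. -/
def deltaFn (T : ℝ) : ℝ := min (Real.log (Real.log T))⁻¹ (1 / 2)

/-!
Substituting `x = t / λ` turns the integral into
`λ^α ∫_λ^∞ (1 - e^{-t}) t^{-α-1} ℓ(y / t) dt` with `y = λ δ^{1/α} ≤ λ`, and since `1 - e^{-t} ≥ 1/2`
for `t ≥ 1` this is at least `(λ^α / 2) ∫_1^∞ t^{-α-1} ℓ(y / t) dt`. By Fatou's lemma and slow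
variation, `ℓ(y)⁻¹ ∫_1^∞ t^{-α-1} ℓ(y / t) dt` has `liminf` at least `∫_1^∞ t^{-α-1} dt = 1/α` as
`y → 0+`, so it exceeds `1/(2α)` for `y < y₀`; as `y ≤ λ`, `λ₀ = min y₀ (1/2)` works for every `δ`.
-/

open Topology
open scoped ENNReal

namespace SlowlyVaryingAtZero

variable {ℓ : ℝ → ℝ}

theorem tendsto_div_comp_div (hℓ : SlowlyVaryingAtZero ℓ) {t : ℝ} (ht : 0 < t) :
    Tendsto (fun y => ℓ (y / t) / ℓ y) (𝓝[>] 0) (𝓝 1) := by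
  simpa only [div_eq_inv_mul _ t] using hℓ.2.2 t⁻¹ (inv_pos.2 ht)

theorem lintegral_le_liminf_lintegral (hℓ : SlowlyVaryingAtZero ℓ) {μ : Measure ℝ}
    (hμ : ∀ᵐ t ∂μ, 0 < t) {w : ℝ → ℝ≥0∞} (hw : Measurable w) :
    ∫⁻ t, w t ∂μ ≤
      liminf (fun y => ∫⁻ t, w t * ENNReal.ofReal (ℓ (y / t) / ℓ y) ∂μ) (𝓝[>] 0) := by
  have hlim : ∀ᵐ t ∂μ,
      liminf (fun y => w t * ENNReal.ofReal (ℓ (y / t) / ℓ y)) (𝓝[>] 0) = w t := by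
    filter_upwards [hμ] with t ht
    have := ENNReal.Tendsto.const_mul
      (ENNReal.tendsto_ofReal (hℓ.tendsto_div_comp_div ht)) (a := w t) (by simp)
    simpa using this.liminf_eq
  calc ∫⁻ t, w t ∂μ
      = ∫⁻ t, liminf (fun y => w t * ENNReal.ofReal (ℓ (y / t) / ℓ y)) (𝓝[>] 0) ∂μ :=
        (lintegral_congr_ae hlim).symm
    _ ≤ _ := lintegral_liminf_le fun y =>
        hw.mul ((hℓ.1.comp (measurable_const.div measurable_id)).div_const _).ennreal_ofReal

theorem eventually_mul_le_lintegral (hℓ : SlowlyVaryingAtZero ℓ) {μ : Measure ℝ}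
    (hμ : ∀ᵐ t ∂μ, 0 < t) {w : ℝ → ℝ≥0∞} (hw : Measurable w) {c : ℝ≥0∞}
    (hc : c < ∫⁻ t, w t ∂μ) :
    ∀ᶠ y in 𝓝[>] 0, ENNReal.ofReal (ℓ y) * c ≤ ∫⁻ t, w t * ENNReal.ofReal (ℓ (y / t)) ∂μ := by
  filter_upwards [eventually_lt_of_lt_liminf (hc.trans_le (hℓ.lintegral_le_liminf_lintegral hμ hw)),
    self_mem_nhdsWithin] with y hy (hy0 : 0 < y)
  have hℓy := hℓ.2.1 y hy0
  calc ENNReal.ofReal (ℓ y) * c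
      ≤ ENNReal.ofReal (ℓ y) * ∫⁻ t, w t * ENNReal.ofReal (ℓ (y / t) / ℓ y) ∂μ := by gcongr
    _ = ∫⁻ t, w t * ENNReal.ofReal (ℓ (y / t)) ∂μ := by
        rw [← lintegral_const_mul' _ _ ENNReal.ofReal_ne_top]
        refine lintegral_congr fun t => ?_
        rw [mul_left_comm, ← ENNReal.ofReal_mul hℓy.le, mul_div_cancel₀ _ hℓy.ne']

end SlowlyVaryingAtZero

theorem lintegral_Ioi_rpow_of_lt {a c : ℝ} (ha : a < -1) (hc : 0 < c) :
    ∫⁻ t in Ioi c, ENNReal.ofReal (t ^ a) = ENNReal.ofReal (-c ^ (a + 1) / (a + 1)) := by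
  rw [← integral_Ioi_rpow_of_lt ha hc, ofReal_integral_eq_lintegral_ofReal
    (integrableOn_Ioi_rpow_of_lt ha hc)]
  filter_upwards [ae_restrict_mem measurableSet_Ioi] with t ht
  exact Real.rpow_nonneg (hc.trans ht).le a

theorem setLIntegral_Ioi_comp_mul_left {c : ℝ} (hc : 0 < c) (a : ℝ) (g : ℝ → ℝ≥0∞) :
    ∫⁻ x in Ioi (c * a), g x = ENNReal.ofReal c * ∫⁻ t in Ioi a, g (c * t) := by
  rw [← image_mul_left_Ioi hc, lintegral_image_eq_lintegral_abs_deriv_mul measurableSet_Ioi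
    (f' := fun _ => c) (fun t _ => by simpa using ((hasDerivAt_id t).const_mul c).hasDerivWithinAt)
    (mul_right_injective₀ hc.ne').injOn, lintegral_const_mul' _ _ ENNReal.ofReal_ne_top]
  simp [abs_of_pos hc]

def laplaceExponent (α : ℝ) (ℓ : ℝ → ℝ) (d lam : ℝ) : ℝ≥0∞ :=
  ∫⁻ x in Ioi 1, ENNReal.ofReal ((1 - Real.exp (-lam * x)) * (x ^ (-α - 1) * ℓ (d / x)))

-- The integrand of `laplaceExponent` at `x = t / lam`, bounded below using `1 - e^{-t} ≥ 1/2`.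
theorem half_rpow_mul_le_inv_mul_one_sub_exp_mul {α lam t L : ℝ} (hlam : 0 < lam) (ht : 1 < t)
    (hL : 0 ≤ L) :
    lam ^ α / 2 * (t ^ (-α - 1) * L) ≤
      lam⁻¹ * ((1 - Real.exp (-lam * (lam⁻¹ * t))) * ((lam⁻¹ * t) ^ (-α - 1) * L)) := by
  have ht0 : 0 < t := one_pos.trans ht
  have hexp : Real.exp (-t) ≤ 1 / 2 :=
    (Real.exp_le_exp.2 (neg_le_neg ht.le)).trans Real.exp_neg_one_lt_half.le
  have hscale : lam⁻¹ * (lam⁻¹ * t) ^ (-α - 1) = lam ^ α * t ^ (-α - 1) := by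
    rw [Real.mul_rpow (inv_nonneg.2 hlam.le) ht0.le, Real.inv_rpow hlam.le, ← Real.rpow_neg hlam.le,
      ← mul_assoc, ← Real.rpow_neg_one, ← Real.rpow_add hlam]
    ring_nf
  calc lam ^ α / 2 * (t ^ (-α - 1) * L)
      ≤ (1 - Real.exp (-t)) * (lam ^ α * t ^ (-α - 1) * L) := by
        nlinarith [mul_nonneg (mul_nonneg (Real.rpow_nonneg hlam.le α)
          (Real.rpow_nonneg ht0.le (-α - 1))) hL]
    _ = _ := by
        rw [← hscale, neg_mul, mul_inv_cancel_left₀ hlam.ne']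
        ring

theorem rpow_div_two_mul_lintegral_le_laplaceExponent {α d lam : ℝ} {ℓ : ℝ → ℝ}
    (hℓ : ∀ x, 0 < x → 0 ≤ ℓ x) (hd : 0 < d) (hlam0 : 0 < lam) (hlam1 : lam ≤ 1) :
    ENNReal.ofReal (lam ^ α / 2) *
        ∫⁻ t in Ioi 1, ENNReal.ofReal (t ^ (-α - 1)) * ENNReal.ofReal (ℓ (lam * d / t)) ≤
      laplaceExponent α ℓ d lam := by
  calc ENNReal.ofReal (lam ^ α / 2) *
        ∫⁻ t in Ioi 1, ENNReal.ofReal (t ^ (-α - 1)) * ENNReal.ofReal (ℓ (lam * d / t))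
      = ∫⁻ t in Ioi 1, ENNReal.ofReal (lam ^ α / 2 * (t ^ (-α - 1) * ℓ (lam * d / t))) := by
        rw [← lintegral_const_mul' _ _ ENNReal.ofReal_ne_top]
        refine setLIntegral_congr_fun measurableSet_Ioi fun t (ht : 1 < t) => ?_
        rw [← ENNReal.ofReal_mul (Real.rpow_nonneg (one_pos.trans ht).le _),
          ← ENNReal.ofReal_mul (by positivity)]
    _ ≤ ∫⁻ t in Ioi 1, ENNReal.ofReal lam⁻¹ * ENNReal.ofReal ((1 - Real.exp (-lam * (lam⁻¹ * t))) *
          ((lam⁻¹ * t) ^ (-α - 1) * ℓ (d / (lam⁻¹ * t)))) := by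
        refine lintegral_mono_ae ?_
        filter_upwards [ae_restrict_mem measurableSet_Ioi] with t (ht : 1 < t)
        have harg : d / (lam⁻¹ * t) = lam * d / t := by field_simp
        rw [← ENNReal.ofReal_mul (by positivity), harg]
        exact ENNReal.ofReal_le_ofReal <| half_rpow_mul_le_inv_mul_one_sub_exp_mul hlam0 ht
          (hℓ _ (by positivity))
    _ = ∫⁻ x in Ioi (lam⁻¹ * 1),
          ENNReal.ofReal ((1 - Real.exp (-lam * x)) * (x ^ (-α - 1) * ℓ (d / x))) := by
        rw [setLIntegral_Ioi_comp_mul_left (inv_pos.2 hlam0),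
          lintegral_const_mul' _ _ ENNReal.ofReal_ne_top]
    _ ≤ laplaceExponent α ℓ d lam :=
        lintegral_mono_set (Ioi_subset_Ioi (by simpa using one_le_inv₀ hlam0 |>.2 hlam1))

/-- **Karamata-type estimate.** For `ℓ` slowly varying at `0` there is `λ₀ ∈ (0,1)` such that
for all `λ ∈ (0,λ₀)` and `δ ∈ (0,1/2]`,
`∫_1^∞ (1 - e^{-λx}) x^{-α-1} ℓ(δ^{1/α}/x) dx ≥ (1/(4α)) λ^α ℓ(λ δ^{1/α})`
(as an inequality of extended nonnegative reals, so that the value `+∞` is allowed). -/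
theorem karamata_laplace_lower_bound
    (α : ℝ) (hα : α ∈ Set.Ioo (0 : ℝ) 1)
    (ℓ : ℝ → ℝ) (hℓ : SlowlyVaryingAtZero ℓ) :
    ∃ lam0 : ℝ, lam0 ∈ Set.Ioo (0 : ℝ) 1 ∧
      ∀ lam : ℝ, lam ∈ Set.Ioo 0 lam0 → ∀ δ : ℝ, δ ∈ Set.Ioc (0 : ℝ) (1 / 2) →
        ENNReal.ofReal (1 / (4 * α) * lam ^ α * ℓ (lam * δ ^ (1 / α))) ≤
          ∫⁻ x in Set.Ioi (1 : ℝ),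
            ENNReal.ofReal ((1 - Real.exp (-lam * x)) * (x ^ (-α - 1) * ℓ (δ ^ (1 / α) / x))) := by
  have hα0 : 0 < α := hα.1
  have htail : ENNReal.ofReal (1 / (2 * α)) < ∫⁻ t in Ioi 1, ENNReal.ofReal (t ^ (-α - 1)) := by
    rw [lintegral_Ioi_rpow_of_lt (by linarith) one_pos, Real.one_rpow, sub_add_cancel,
      neg_div_neg_eq, ENNReal.ofReal_lt_ofReal_iff (by positivity)]
    exact one_div_lt_one_div_of_lt hα0 (by linarith)
  obtain ⟨y₀, hy₀, hbound⟩ := mem_nhdsGT_iff_exists_Ioo_subset.1 <|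
    hℓ.eventually_mul_le_lintegral
      ((ae_restrict_mem measurableSet_Ioi).mono fun t ht => one_pos.trans ht) (by fun_prop) htail
  refine ⟨min y₀ (1 / 2), ⟨lt_min hy₀ (by norm_num), by linarith [min_le_right y₀ (1 / 2)]⟩,
    fun lam ⟨hlam0, hlam⟩ δ ⟨hδ0, hδ⟩ => ?_⟩
  have hd0 : 0 < δ ^ (1 / α) := by positivity
  have hd1 : δ ^ (1 / α) ≤ 1 := Real.rpow_le_one hδ0.le (by linarith) (by positivity)
  have hy : lam * δ ^ (1 / α) ∈ Ioo 0 y₀ :=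
    ⟨mul_pos hlam0 hd0, by nlinarith [min_le_left y₀ (1 / 2)]⟩
  calc ENNReal.ofReal (1 / (4 * α) * lam ^ α * ℓ (lam * δ ^ (1 / α)))
      = ENNReal.ofReal (lam ^ α / 2) *
          (ENNReal.ofReal (ℓ (lam * δ ^ (1 / α))) * ENNReal.ofReal (1 / (2 * α))) := by
        rw [← ENNReal.ofReal_mul (hℓ.2.1 _ hy.1).le, ← ENNReal.ofReal_mul (by positivity)]
        ring_nf
    _ ≤ ENNReal.ofReal (lam ^ α / 2) * ∫⁻ t in Ioi 1,
          ENNReal.ofReal (t ^ (-α - 1)) * ENNReal.ofReal (ℓ (lam * δ ^ (1 / α) / t)) := by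
        gcongr
        exact hbound hy
    _ ≤ _ := rpow_div_two_mul_lintegral_le_laplaceExponent (fun x hx => (hℓ.2.1 x hx).le) hd0
        hlam0 (by linarith [min_le_right y₀ (1 / 2)])
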